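/- Let (A,B,P,Q,μ,ν) be a graded Morita context with idempotent torsion-free graded rings, torsion-free unital bimodules, and surjective trace maps. Then P ⊗_B Q carries a Γ-graded (associative) ring structure via (p₁⊗q₁)(p₂⊗q₂) = p₁ ⊗ [q₁,p₂]q₂, and likewise Q ⊗_A P via (q₁⊗p₁)(q₂⊗p₂) = q₁⟨p₁,q₂⟩ ⊗ p₂. -/

import Mathlib

/-!
Common infrastructure: non-unital (graded) rings, non-unital graded modules
(given by explicit action functions), graded homomorphisms of all degrees,
traces, torsion submodules, balanced tensor products, and graded Morita
contexts, following Dokuchaev–Simón, "Graded Equivalence for Graded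
Idempotent Rings".
-/

open DirectSum

section CommonDefs

variable {Γ : Type*} [Group Γ] {A B M N P Q : Type*}

/-- `M` is a left module over the non-unital ring `A` via the action `s`. -/
structure IsLMod (A M : Type*) [NonUnitalRing A] [AddCommGroup M] (s : A → M → M) : Prop where
  smul_add : ∀ (a : A) (m n : M), s a (m + n) = s a m + s a n
  add_smul : ∀ (a b : A) (m : M), s (a + b) m = s a m + s b m
  mul_smul : ∀ (a b : A) (m : M), s (a * b) m = s a (s b m)

/-- `M` is a right module over the non-unital ring `B` via the action `s`. -/
structure IsRMod (B M : Type*) [NonUnitalRing B] [AddCommGroup M] (s : M → B → M) : Prop where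
  add_smul : ∀ (m n : M) (b : B), s (m + n) b = s m b + s n b
  smul_add : ∀ (m : M) (a b : B), s m (a + b) = s m a + s m b
  smul_mul : ∀ (m : M) (a b : B), s m (a * b) = s (s m a) b

/-- The ring `A` is idempotent: `A² = A`. -/
def IsIdem (A : Type*) [NonUnitalRing A] : Prop :=
  ∀ a : A, a ∈ AddSubgroup.closure {x : A | ∃ y z : A, x = y * z}

/-- The left `A`-module with action `s` is unital: `AM = M`. -/
def IsUnitalL [NonUnitalRing A] [AddCommGroup M] (s : A → M → M) : Prop :=
  ∀ m : M, m ∈ AddSubgroup.closure {x : M | ∃ (a : A) (m' : M), x = s a m'}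

/-- The right `B`-module with action `s` is unital: `MB = M`. -/
def IsUnitalR [NonUnitalRing B] [AddCommGroup M] (s : M → B → M) : Prop :=
  ∀ m : M, m ∈ AddSubgroup.closure {x : M | ∃ (m' : M) (b : B), x = s m' b}

/-- The left `A`-module with action `s` is torsion-free: `Am = 0 → m = 0`. -/
def IsTorsionFreeL [NonUnitalRing A] [AddCommGroup M] (s : A → M → M) : Prop :=
  ∀ m : M, (∀ a : A, s a m = 0) → m = 0

/-- The right `B`-module with action `s` is torsion-free. -/
def IsTorsionFreeR [NonUnitalRing B] [AddCommGroup M] (s : M → B → M) : Prop :=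
  ∀ m : M, (∀ b : B, s m b = 0) → m = 0

/-- The family `𝒜` makes `A` a `Γ`-graded ring (multiplicativity of the grading;
the direct sum decomposition is recorded by a `DirectSum.Decomposition` instance). -/
def IsGRing [NonUnitalRing A] (𝒜 : Γ → AddSubgroup A) : Prop :=
  ∀ ⦃σ τ : Γ⦄ ⦃a b : A⦄, a ∈ 𝒜 σ → b ∈ 𝒜 τ → a * b ∈ 𝒜 (σ * τ)

/-- Grading compatibility for a left module: `A_σ · M_τ ⊆ M_{στ}`. -/
def IsGModL [NonUnitalRing A] [AddCommGroup M] (𝒜 : Γ → AddSubgroup A)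
    (ℳ : Γ → AddSubgroup M) (s : A → M → M) : Prop :=
  ∀ ⦃σ τ : Γ⦄ ⦃a : A⦄ ⦃m : M⦄, a ∈ 𝒜 σ → m ∈ ℳ τ → s a m ∈ ℳ (σ * τ)

/-- Grading compatibility for a right module: `M_τ · B_σ ⊆ M_{τσ}`. -/
def IsGModR [NonUnitalRing B] [AddCommGroup M] (ℬ : Γ → AddSubgroup B)
    (ℳ : Γ → AddSubgroup M) (s : M → B → M) : Prop :=
  ∀ ⦃σ τ : Γ⦄ ⦃m : M⦄ ⦃b : B⦄, m ∈ ℳ τ → b ∈ ℬ σ → s m b ∈ ℳ (τ * σ)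

/-- `f : M → N` is a homomorphism of left `A`-modules. -/
def IsLinL [NonUnitalRing A] [AddCommGroup M] [AddCommGroup N]
    (sM : A → M → M) (sN : A → N → N) (f : M →+ N) : Prop :=
  ∀ (a : A) (m : M), f (sM a m) = sN a (f m)

/-- `f : M → N` is a homomorphism of right `B`-modules. -/
def IsLinR [NonUnitalRing B] [AddCommGroup M] [AddCommGroup N]
    (sM : M → B → M) (sN : N → B → N) (f : M →+ N) : Prop :=
  ∀ (m : M) (b : B), f (sM m b) = sN (f m) b

/-- `f` is a graded homomorphism of degree `σ` (left module convention):
`f(M_τ) ⊆ N_{τσ}`. -/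
def IsDegL [AddCommGroup M] [AddCommGroup N] (ℳ : Γ → AddSubgroup M)
    (𝒩 : Γ → AddSubgroup N) (σ : Γ) (f : M →+ N) : Prop :=
  ∀ τ : Γ, ∀ m ∈ ℳ τ, f m ∈ 𝒩 (τ * σ)

/-- `f` is a graded homomorphism of degree `σ` (right module convention):
`f(M_τ) ⊆ N_{στ}`. -/
def IsDegR [AddCommGroup M] [AddCommGroup N] (ℳ : Γ → AddSubgroup M)
    (𝒩 : Γ → AddSubgroup N) (σ : Γ) (f : M →+ N) : Prop :=
  ∀ τ : Γ, ∀ m ∈ ℳ τ, f m ∈ 𝒩 (σ * τ)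

/-- `HOM_A(M,N)`: the additive group of graded left `A`-module homomorphisms
of all degrees (i.e. sums of homogeneous `A`-linear maps). -/
def HOML [NonUnitalRing A] [AddCommGroup M] [AddCommGroup N]
    (sM : A → M → M) (sN : A → N → N)
    (ℳ : Γ → AddSubgroup M) (𝒩 : Γ → AddSubgroup N) : AddSubgroup (M →+ N) :=
  AddSubgroup.closure {f | IsLinL sM sN f ∧ ∃ σ : Γ, IsDegL ℳ 𝒩 σ f}

/-- `HOM_B(M,N)` for right modules. -/
def HOMR [NonUnitalRing B] [AddCommGroup M] [AddCommGroup N]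
    (sM : M → B → M) (sN : N → B → N)
    (ℳ : Γ → AddSubgroup M) (𝒩 : Γ → AddSubgroup N) : AddSubgroup (M →+ N) :=
  AddSubgroup.closure {f | IsLinR sM sN f ∧ ∃ σ : Γ, IsDegR ℳ 𝒩 σ f}

/-- Given a subgroup `H` of homomorphisms `M →+ N` and a `C`-action on `M`
(`tw`), this is the subgroup `C·H` generated by the twisted maps
`c·f = f ∘ (tw c)`.  It models e.g. `B·HOM_A(P,N)` with `(b·f)(p) = f(pb)`. -/
def smulHOM [AddCommGroup M] [AddCommGroup N] (C : Type*)
    (H : AddSubgroup (M →+ N)) (tw : C → M → M) : AddSubgroup (M →+ N) :=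
  AddSubgroup.closure {g | ∃ (c : C) (f : M →+ N), f ∈ H ∧ ∀ m : M, g m = f (tw c m)}

/-- The graded trace `Tr_M(P)`: the additive subgroup of `M` generated by the
images of all graded homomorphisms `P → M` of arbitrary degree. -/
def TraceL [NonUnitalRing A] [AddCommGroup P] [AddCommGroup M]
    (sP : A → P → P) (sM : A → M → M)
    (𝓟 : Γ → AddSubgroup P) (ℳ : Γ → AddSubgroup M) : AddSubgroup M :=
  AddSubgroup.closure {x | ∃ f ∈ HOML sP sM 𝓟 ℳ, ∃ p : P, x = f p}

/-- The torsion part `t_A(M) = {m ∈ M | A·m = 0}`, as an additive subgroup. -/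
def torsionL [NonUnitalRing A] [AddCommGroup M] {s : A → M → M}
    (hM : IsLMod A M s) : AddSubgroup M where
  carrier := {m : M | ∀ a : A, s a m = 0}
  zero_mem' := by
    intro a
    have h := hM.smul_add a 0 0
    rw [add_zero] at h
    exact left_eq_add.mp h
  add_mem' := by
    intro m n hm hn a
    rw [hM.smul_add, hm a, hn a, add_zero]
  neg_mem' := by
    intro m hm a
    have h0 : s a (0 : M) = 0 := by
      have h := hM.smul_add a 0 0
      rw [add_zero] at h
      exact left_eq_add.mp h
    have h := hM.smul_add a m (-m)
    rw [add_neg_cancel, h0, hm a, zero_add] at h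
    exact h.symm

end CommonDefs

section Tensor

variable (B : Type*) {P Q : Type*} [AddCommGroup P] [AddCommGroup Q]

/-- Relations defining the balanced tensor product `P ⊗_B Q` of a right
`B`-module `P` (action `rs`) and a left `B`-module `Q` (action `ls`). -/
def TenRel (rs : P → B → P) (ls : B → Q → Q) : AddSubgroup (FreeAbelianGroup (P × Q)) :=
  AddSubgroup.closure
    ({x | ∃ (p p' : P) (q : Q), x = FreeAbelianGroup.of (p + p', q) -
        FreeAbelianGroup.of (p, q) - FreeAbelianGroup.of (p', q)} ∪
     {x | ∃ (p : P) (q q' : Q), x = FreeAbelianGroup.of (p, q + q') -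
        FreeAbelianGroup.of (p, q) - FreeAbelianGroup.of (p, q')} ∪
     {x | ∃ (p : P) (b : B) (q : Q), x = FreeAbelianGroup.of (rs p b, q) -
        FreeAbelianGroup.of (p, ls b q)})

/-- The balanced tensor product `P ⊗_B Q`. -/
abbrev Ten (rs : P → B → P) (ls : B → Q → Q) : Type _ :=
  FreeAbelianGroup (P × Q) ⧸ TenRel B rs ls

/-- The elementary tensor `p ⊗ q`. -/
def tmul {B : Type*} {rs : P → B → P} {ls : B → Q → Q} (p : P) (q : Q) :
    Ten B rs ls :=
  QuotientAddGroup.mk (FreeAbelianGroup.of (p, q))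

/-- The natural grading of the tensor product: the `ρ`-component is generated
by the `p ⊗ q` with `p, q` homogeneous of degrees multiplying to `ρ`. -/
def TenGr {Γ : Type*} [Group Γ] {B : Type*} {rs : P → B → P} {ls : B → Q → Q}
    (𝓟 : Γ → AddSubgroup P) (𝒬 : Γ → AddSubgroup Q) (ρ : Γ) :
    AddSubgroup (Ten B rs ls) :=
  AddSubgroup.closure
    {x | ∃ (σ τ : Γ) (p : P) (q : Q), p ∈ 𝓟 σ ∧ q ∈ 𝒬 τ ∧ σ * τ = ρ ∧ x = tmul p q}

end Tensor

section Morita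

/-- A graded Morita context `(A, B, P, Q, μ, ν)` between idempotent graded
rings, with the trace maps given by the balanced pairings
`pr = ⟨-,-⟩ : P × Q → A` and `br = [-,-] : Q × P → B`, both surjective. -/
structure GMoritaCtx (Γ : Type*) [Group Γ] (A B P Q : Type*)
    [NonUnitalRing A] [NonUnitalRing B] [AddCommGroup P] [AddCommGroup Q]
    (𝒜 : Γ → AddSubgroup A) (ℬ : Γ → AddSubgroup B)
    (𝓟 : Γ → AddSubgroup P) (𝒬 : Γ → AddSubgroup Q)
    (ap : A → P → P) (pb : P → B → P) (bq : B → Q → Q) (qa : Q → A → Q)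
    (pr : P → Q → A) (br : Q → P → B) : Prop where
  gradeA : IsGRing 𝒜
  gradeB : IsGRing ℬ
  idemA : IsIdem A
  idemB : IsIdem B
  lmodP : IsLMod A P ap
  rmodP : IsRMod B P pb
  bimodP : ∀ (a : A) (p : P) (b : B), pb (ap a p) b = ap a (pb p b)
  lmodQ : IsLMod B Q bq
  rmodQ : IsRMod A Q qa
  bimodQ : ∀ (b : B) (q : Q) (a : A), qa (bq b q) a = bq b (qa q a)
  unitalPl : IsUnitalL ap
  unitalPr : IsUnitalR pb
  unitalQl : IsUnitalL bq
  unitalQr : IsUnitalR qa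
  gradePl : IsGModL 𝒜 𝓟 ap
  gradePr : IsGModR ℬ 𝓟 pb
  gradeQl : IsGModL ℬ 𝒬 bq
  gradeQr : IsGModR 𝒜 𝒬 qa
  pr_addl : ∀ (p p' : P) (q : Q), pr (p + p') q = pr p q + pr p' q
  pr_addr : ∀ (p : P) (q q' : Q), pr p (q + q') = pr p q + pr p q'
  br_addl : ∀ (q q' : Q) (p : P), br (q + q') p = br q p + br q' p
  br_addr : ∀ (q : Q) (p p' : P), br q (p + p') = br q p + br q p'
  pr_bal : ∀ (p : P) (b : B) (q : Q), pr (pb p b) q = pr p (bq b q)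
  br_bal : ∀ (q : Q) (a : A) (p : P), br (qa q a) p = br q (ap a p)
  pr_linl : ∀ (a : A) (p : P) (q : Q), pr (ap a p) q = a * pr p q
  pr_linr : ∀ (p : P) (q : Q) (a : A), pr p (qa q a) = pr p q * a
  br_linl : ∀ (b : B) (q : Q) (p : P), br (bq b q) p = b * br q p
  br_linr : ∀ (q : Q) (p : P) (b : B), br q (pb p b) = br q p * b
  pr_graded : ∀ ⦃σ τ : Γ⦄ ⦃p : P⦄ ⦃q : Q⦄, p ∈ 𝓟 σ → q ∈ 𝒬 τ → pr p q ∈ 𝒜 (σ * τ)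
  br_graded : ∀ ⦃σ τ : Γ⦄ ⦃q : Q⦄ ⦃p : P⦄, q ∈ 𝒬 σ → p ∈ 𝓟 τ → br q p ∈ ℬ (σ * τ)
  assoc1 : ∀ (p' : P) (q : Q) (p : P), pb p' (br q p) = ap (pr p' q) p
  assoc2 : ∀ (q' : Q) (p : P) (q : Q), qa q' (pr p q) = bq (br q' p) q
  sur_pr : ∀ a : A, a ∈ AddSubgroup.closure {x : A | ∃ (p : P) (q : Q), x = pr p q}
  sur_br : ∀ b : B, b ∈ AddSubgroup.closure {x : B | ∃ (q : Q) (p : P), x = br q p}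

end Morita

section TenAux

variable {B P Q M : Type*} [AddCommGroup P] [AddCommGroup Q] [AddCommGroup M]
variable {rs : P → B → P} {ls : B → Q → Q}

lemma tmul_add_left (p p' : P) (q : Q) :
    (tmul (p + p') q : Ten B rs ls) = tmul p q + tmul p' q := by
  have hg : (FreeAbelianGroup.of ((p + p' : P), q) - FreeAbelianGroup.of (p, q) -
      FreeAbelianGroup.of (p', q)) ∈ TenRel B rs ls :=
    AddSubgroup.subset_closure (Or.inl (Or.inl ⟨p, p', q, rfl⟩))
  show QuotientAddGroup.mk _ = QuotientAddGroup.mk _ + QuotientAddGroup.mk _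
  rw [← QuotientAddGroup.mk_add, QuotientAddGroup.eq]
  convert AddSubgroup.neg_mem _ hg using 1
  abel

lemma tmul_add_right (p : P) (q q' : Q) :
    (tmul p (q + q') : Ten B rs ls) = tmul p q + tmul p q' := by
  have hg : (FreeAbelianGroup.of (p, q + q') - FreeAbelianGroup.of (p, q) -
      FreeAbelianGroup.of (p, q')) ∈ TenRel B rs ls :=
    AddSubgroup.subset_closure (Or.inl (Or.inr ⟨p, q, q', rfl⟩))
  show QuotientAddGroup.mk _ = QuotientAddGroup.mk _ + QuotientAddGroup.mk _
  rw [← QuotientAddGroup.mk_add, QuotientAddGroup.eq]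
  convert AddSubgroup.neg_mem _ hg using 1
  abel

lemma tmul_bal (p : P) (b : B) (q : Q) :
    (tmul (rs p b) q : Ten B rs ls) = tmul p (ls b q) := by
  have hg : (FreeAbelianGroup.of (rs p b, q) - FreeAbelianGroup.of (p, ls b q))
      ∈ TenRel B rs ls :=
    AddSubgroup.subset_closure (Or.inr ⟨p, b, q, rfl⟩)
  show QuotientAddGroup.mk _ = QuotientAddGroup.mk _
  rw [QuotientAddGroup.eq]
  convert AddSubgroup.neg_mem _ hg using 1
  abel

@[elab_as_elim]
lemma Ten.ind {motive : Ten B rs ls → Prop} (h0 : motive 0)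
    (ht : ∀ p q, motive (tmul p q)) (hn : ∀ x, motive x → motive (-x))
    (ha : ∀ x y, motive x → motive y → motive (x + y)) : ∀ x, motive x := by
  intro x
  induction x using QuotientAddGroup.induction_on with
  | H z =>
    induction z using FreeAbelianGroup.induction_on with
    | zero => exact h0
    | of x => exact ht x.1 x.2
    | neg x h => exact hn _ h
    | add x y hx hy => exact ha _ _ hx hy

/-- Lift a bi-additive balanced map to the tensor product. -/
noncomputable def TenLift (f : P × Q → M)
    (h1 : ∀ p p' q, f (p + p', q) = f (p, q) + f (p', q))
    (h2 : ∀ p q q', f (p, q + q') = f (p, q) + f (p, q'))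
    (h3 : ∀ p b q, f (rs p b, q) = f (p, ls b q)) : Ten B rs ls →+ M :=
  QuotientAddGroup.lift _ (FreeAbelianGroup.lift f) (by
    intro x hx
    have : FreeAbelianGroup.lift f x = 0 := by
      refine AddSubgroup.closure_induction
        (p := fun x _ => FreeAbelianGroup.lift f x = 0) ?_ ?_ ?_ ?_ hx
      · rintro x ((⟨p, p', q, rfl⟩ | ⟨p, q, q', rfl⟩) | ⟨p, b, q, rfl⟩) <;>
          simp only [map_sub, FreeAbelianGroup.lift_apply_of, h1, h2, h3] <;> abel
      · simp
      · intro x y _ _ hx hy; simp [map_add, hx, hy]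
      · intro x _ hx; simp [hx]
    exact this)

@[simp] lemma TenLift_tmul (f : P × Q → M) (h1 h2 h3) (p : P) (q : Q) :
    TenLift (rs := rs) (ls := ls) f h1 h2 h3 (tmul p q) = f (p, q) := by
  show QuotientAddGroup.lift _ _ _ (QuotientAddGroup.mk _) = _
  exact FreeAbelianGroup.lift_apply_of (f := f) (p, q)

lemma Ten.hom_ext {F G : Ten B rs ls →+ M}
    (h : ∀ p q, F (tmul p q) = G (tmul p q)) : F = G := by
  refine DFunLike.ext _ _ fun x => ?_
  induction x using Ten.ind with
  | h0 => simp
  | ht p q => exact h p q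
  | hn x hx => simp [hx]
  | ha x y hx hy => simp [hx, hy]

end TenAux

section MulOf

variable {C P Q : Type*} [AddCommGroup P] [AddCommGroup Q]
variable {rs : P → C → P} {ls : C → Q → Q}

/-- Build a multiplication hom on a balanced tensor product from a
function on elementary tensors that is additive and balanced in both pairs. -/
noncomputable def mulOf (f : P → Q → P → Q → Ten C rs ls)
    (ha1 : ∀ p p' q x y, f (p + p') q x y = f p q x y + f p' q x y)
    (ha2 : ∀ p q q' x y, f p (q + q') x y = f p q x y + f p q' x y)
    (hb1 : ∀ p b q x y, f (rs p b) q x y = f p (ls b q) x y)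
    (ha3 : ∀ p q x x' y, f p q (x + x') y = f p q x y + f p q x' y)
    (ha4 : ∀ p q x y y', f p q x (y + y') = f p q x y + f p q x y')
    (hb2 : ∀ p q x b y, f p q (rs x b) y = f p q x (ls b y)) :
    Ten C rs ls →+ Ten C rs ls →+ Ten C rs ls :=
  TenLift (fun x => TenLift (fun y => f x.1 x.2 y.1 y.2)
      (fun p p' q => ha3 x.1 x.2 p p' q)
      (fun p q q' => ha4 x.1 x.2 p q q')
      (fun p b q => hb2 x.1 x.2 p b q))
    (fun p p' q => Ten.hom_ext (fun x y => by
      simp [TenLift_tmul, AddMonoidHom.add_apply, ha1]))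
    (fun p q q' => Ten.hom_ext (fun x y => by
      simp [TenLift_tmul, AddMonoidHom.add_apply, ha2]))
    (fun p b q => Ten.hom_ext (fun x y => by
      simp [TenLift_tmul, hb1]))

@[simp] lemma mulOf_tmul (f : P → Q → P → Q → Ten C rs ls)
    (ha1 ha2 hb1 ha3 ha4 hb2) (p : P) (q : Q) (p' : P) (q' : Q) :
    mulOf f ha1 ha2 hb1 ha3 ha4 hb2 (tmul p q) (tmul p' q') = f p q p' q' := by
  rw [mulOf, TenLift_tmul, TenLift_tmul]

end MulOf

universe u v

/-- For a graded Morita context with idempotent torsion-free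
graded rings, torsion-free unital bimodules and surjective trace maps, the
tensor products `P ⊗_B Q` and `Q ⊗_A P` carry `Γ`-graded associative ring
structures determined by `(p₁⊗q₁)(p₂⊗q₂) = p₁ ⊗ [q₁,p₂]q₂` and
`(q₁⊗p₁)(q₂⊗p₂) = q₁⟨p₁,q₂⟩ ⊗ p₂`. -/
theorem tensor_ring_structures
    {Γ : Type v} {A B P Q : Type u} [Group Γ] [DecidableEq Γ]
    [NonUnitalRing A] [NonUnitalRing B] [AddCommGroup P] [AddCommGroup Q]
    (𝒜 : Γ → AddSubgroup A) (ℬ : Γ → AddSubgroup B)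
    (𝓟 : Γ → AddSubgroup P) (𝒬 : Γ → AddSubgroup Q)
    [DirectSum.Decomposition 𝒜] [DirectSum.Decomposition ℬ]
    [DirectSum.Decomposition 𝓟] [DirectSum.Decomposition 𝒬]
    (ap : A → P → P) (pb : P → B → P) (bq : B → Q → Q) (qa : Q → A → Q)
    (pr : P → Q → A) (br : Q → P → B)
    (ctx : GMoritaCtx Γ A B P Q 𝒜 ℬ 𝓟 𝒬 ap pb bq qa pr br)
    (hAl : IsTorsionFreeL (fun a x : A => a * x))
    (hAr : IsTorsionFreeR (fun x a : A => x * a))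
    (hBl : IsTorsionFreeL (fun b x : B => b * x))
    (hBr : IsTorsionFreeR (fun x b : B => x * b))
    (hPl : IsTorsionFreeL ap) (hPr : IsTorsionFreeR pb)
    (hQl : IsTorsionFreeL bq) (hQr : IsTorsionFreeR qa) :
    -- a graded ring structure on `P ⊗_B Q`
    (∃ mul : Ten B pb bq → Ten B pb bq → Ten B pb bq,
      (∀ x y z, mul (x + y) z = mul x z + mul y z) ∧
      (∀ x y z, mul x (y + z) = mul x y + mul x z) ∧
      (∀ x y z, mul (mul x y) z = mul x (mul y z)) ∧
      (∀ (p p' : P) (q q' : Q),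
        mul (tmul p q) (tmul p' q') = tmul p (bq (br q p') q')) ∧
      (∀ (σ τ : Γ) x y, x ∈ TenGr 𝓟 𝒬 σ → y ∈ TenGr 𝓟 𝒬 τ →
        mul x y ∈ TenGr 𝓟 𝒬 (σ * τ))) ∧
    -- a graded ring structure on `Q ⊗_A P`
    (∃ mul : Ten A qa ap → Ten A qa ap → Ten A qa ap,
      (∀ x y z, mul (x + y) z = mul x z + mul y z) ∧
      (∀ x y z, mul x (y + z) = mul x y + mul x z) ∧
      (∀ x y z, mul (mul x y) z = mul x (mul y z)) ∧
      (∀ (q q' : Q) (p p' : P),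
        mul (tmul q p) (tmul q' p') = tmul (qa q (pr p q')) p') ∧
      (∀ (σ τ : Γ) x y, x ∈ TenGr 𝒬 𝓟 σ → y ∈ TenGr 𝒬 𝓟 τ →
        mul x y ∈ TenGr 𝒬 𝓟 (σ * τ))) := by
  
  constructor
  · -- P ⊗_B Q
    refine ⟨fun x y => mulOf (rs := pb) (ls := bq)
        (fun p q p' q' => tmul p (bq (br q p') q'))
        (fun p p' q x y => tmul_add_left _ _ _)
        (fun p q q' x y => by rw [ctx.br_addl, ctx.lmodQ.add_smul, tmul_add_right])
        (fun p b q x y => by rw [tmul_bal, ctx.br_linl, ctx.lmodQ.mul_smul])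
        (fun p q x x' y => by rw [ctx.br_addr, ctx.lmodQ.add_smul, tmul_add_right])
        (fun p q x y y' => by rw [ctx.lmodQ.smul_add, tmul_add_right])
        (fun p q x b y => by rw [ctx.br_linr, ctx.lmodQ.mul_smul])
        x y, ?_, ?_, ?_, ?_, ?_⟩
    · intro x y z; simp [map_add, AddMonoidHom.add_apply]
    · intro x y z; simp [map_add]
    · intro x y z
      induction x using Ten.ind with
      | h0 => simp
      | hn x hx =>
        simp only [map_neg, AddMonoidHom.neg_apply, neg_inj] at hx ⊢; exact hx
      | ha x x' hx hx' =>
        simp only [map_add, AddMonoidHom.add_apply] at hx hx' ⊢; rw [hx, hx']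
      | ht p q =>
        induction y using Ten.ind with
        | h0 => simp
        | hn y hy =>
          simp only [map_neg, AddMonoidHom.neg_apply, neg_inj] at hy ⊢; exact hy
        | ha y y' hy hy' =>
          simp only [map_add, AddMonoidHom.add_apply] at hy hy' ⊢; rw [hy, hy']
        | ht p' q' =>
          induction z using Ten.ind with
          | h0 => simp
          | hn z hz =>
            simp only [map_neg, AddMonoidHom.neg_apply, neg_inj] at hz ⊢; exact hz
          | ha z z' hz hz' =>
            simp only [map_add, AddMonoidHom.add_apply] at hz hz' ⊢; rw [hz, hz']
          | ht p'' q'' =>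
            simp only [mulOf_tmul, ctx.br_linl, ctx.lmodQ.mul_smul]
    · intro p p' q q'; simp [mulOf_tmul]
    · intro σ τ x y hx hy
      refine AddSubgroup.closure_induction
        (p := fun x _ => ∀ y, y ∈ TenGr 𝓟 𝒬 τ → mulOf _ _ _ _ _ _ _ x y ∈ TenGr 𝓟 𝒬 (σ * τ))
        ?_ ?_ ?_ ?_ hx y hy
      · rintro x ⟨σ₁, τ₁, p, q, hp, hq, hστ, rfl⟩ y hy
        refine AddSubgroup.closure_induction
          (p := fun y _ => mulOf _ _ _ _ _ _ _ (tmul p q) y ∈ TenGr 𝓟 𝒬 (σ * τ)) ?_ ?_ ?_ ?_ hy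
        · rintro y ⟨σ₂, τ₂, p', q', hp', hq', hστ', rfl⟩
          rw [mulOf_tmul]
          refine AddSubgroup.subset_closure
            ⟨σ₁, τ₁ * σ₂ * τ₂, p, _, hp,
              ctx.gradeQl (ctx.br_graded hq hp') hq', ?_, rfl⟩
          rw [← hστ, ← hστ']; group
        · simp only [map_zero]; exact zero_mem _
        · intro a b _ _ ha hb
          rw [map_add]; exact add_mem ha hb
        · intro a _ ha
          rw [map_neg]; exact neg_mem ha
      · intro y _
        simp only [map_zero, AddMonoidHom.zero_apply]; exact zero_mem _
      · intro a b _ _ ha hb y hy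
        rw [map_add, AddMonoidHom.add_apply]; exact add_mem (ha y hy) (hb y hy)
      · intro a _ ha y hy
        rw [map_neg, AddMonoidHom.neg_apply]; exact neg_mem (ha y hy)
  · -- Q ⊗_A P
    refine ⟨fun x y => mulOf (rs := qa) (ls := ap)
        (fun q p q' p' => tmul (qa q (pr p q')) p')
        (fun q q' p x y => by rw [ctx.rmodQ.add_smul, tmul_add_left])
        (fun q p p' x y => by rw [ctx.pr_addl, ctx.rmodQ.smul_add, tmul_add_left])
        (fun q a p x y => by rw [ctx.pr_linl, ctx.rmodQ.smul_mul])
        (fun q p x x' y => by rw [ctx.pr_addr, ctx.rmodQ.smul_add, tmul_add_left])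
        (fun q p x y y' => by rw [tmul_add_right])
        (fun q p x a y => by rw [ctx.pr_linr, ctx.rmodQ.smul_mul, tmul_bal])
        x y, ?_, ?_, ?_, ?_, ?_⟩
    · intro x y z; simp [map_add, AddMonoidHom.add_apply]
    · intro x y z; simp [map_add]
    · intro x y z
      induction x using Ten.ind with
      | h0 => simp
      | hn x hx =>
        simp only [map_neg, AddMonoidHom.neg_apply, neg_inj] at hx ⊢; exact hx
      | ha x x' hx hx' =>
        simp only [map_add, AddMonoidHom.add_apply] at hx hx' ⊢; rw [hx, hx']
      | ht q p =>
        induction y using Ten.ind with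
        | h0 => simp
        | hn y hy =>
          simp only [map_neg, AddMonoidHom.neg_apply, neg_inj] at hy ⊢; exact hy
        | ha y y' hy hy' =>
          simp only [map_add, AddMonoidHom.add_apply] at hy hy' ⊢; rw [hy, hy']
        | ht q' p' =>
          induction z using Ten.ind with
          | h0 => simp
          | hn z hz =>
            simp only [map_neg, AddMonoidHom.neg_apply, neg_inj] at hz ⊢; exact hz
          | ha z z' hz hz' =>
            simp only [map_add, AddMonoidHom.add_apply] at hz hz' ⊢; rw [hz, hz']
          | ht q'' p'' =>
            simp only [mulOf_tmul, ctx.pr_linr, ctx.rmodQ.smul_mul]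
    · intro q q' p p'; simp [mulOf_tmul]
    · intro σ τ x y hx hy
      refine AddSubgroup.closure_induction
        (p := fun x _ => ∀ y, y ∈ TenGr 𝒬 𝓟 τ → mulOf _ _ _ _ _ _ _ x y ∈ TenGr 𝒬 𝓟 (σ * τ))
        ?_ ?_ ?_ ?_ hx y hy
      · rintro x ⟨σ₁, τ₁, q, p, hq, hp, hστ, rfl⟩ y hy
        refine AddSubgroup.closure_induction
          (p := fun y _ => mulOf _ _ _ _ _ _ _ (tmul q p) y ∈ TenGr 𝒬 𝓟 (σ * τ)) ?_ ?_ ?_ ?_ hy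
        · rintro y ⟨σ₂, τ₂, q', p', hq', hp', hστ', rfl⟩
          rw [mulOf_tmul]
          refine AddSubgroup.subset_closure
            ⟨σ₁ * (τ₁ * σ₂), τ₂, _, p',
              ctx.gradeQr hq (ctx.pr_graded hp hq'), hp', ?_, rfl⟩
          rw [← hστ, ← hστ']; group
        · simp only [map_zero]; exact zero_mem _
        · intro a b _ _ ha hb
          rw [map_add]; exact add_mem ha hb
        · intro a _ ha
          rw [map_neg]; exact neg_mem ha
      · intro y _
        simp only [map_zero, AddMonoidHom.zero_apply]; exact zero_mem _
      · intro a b _ _ ha hb y hy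
        rw [map_add, AddMonoidHom.add_apply]; exact add_mem (ha y hy) (hb y hy)
      · intro a _ ha y hy
        rw [map_neg, AddMonoidHom.neg_apply]; exact neg_mem (ha y hy)
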